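/- Let H be a finite-dimensional complex inner product space and let Π and Δ be orthogonal projections on H. If ψ ∈ ker Π and w = (Π − ΠΔΠ)⁺ Δ ψ, then (I − Δ)(ψ + w) = P_{ker Π ∩ ker Δ} ψ. -/

import Mathlib

/-!
Write `A = Π − ΠΔΠ`; it is the Gram operator `T† T` of `T = (I − Δ)Π`, so `A` is self-adjoint and
`range A = range T† = range (Π(I − Δ))`. Since `Πψ = 0`, this range contains `ΠΔψ = −Π(I − Δ)ψ`,
while `Δψ − ΠΔψ ∈ ker A = (range A)ᗮ`; as `AA⁺` is the orthogonal projection onto `range A`, this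
gives `Aw = ΠΔψ`, and since `w ∈ range A⁺ ⊆ range Π` this says `ΠΔ(ψ + w) = w`. Now
`x = (I − Δ)(ψ + w)` lies in `ker Π ∩ ker Δ`, and `ψ − x = Δ(ψ + w) − w` is orthogonal to that
subspace, being the difference of a vector in `range Δ` and one in `range Π`.
-/

open LinearMap

/-- The orthogonal projection onto a submodule, as an endomorphism of the ambient space. -/
noncomputable def projL {H : Type*} [NormedAddCommGroup H] [InnerProductSpace ℂ H]
    (K : Submodule ℂ H) [K.HasOrthogonalProjection] : H →ₗ[ℂ] H :=
  K.subtype ∘ₗ (K.orthogonalProjectionOnto).toLinearMap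

/-- The four Moore–Penrose equations: `B` is the Moore–Penrose pseudoinverse of `A`. -/
def IsMPInv {H : Type*} [NormedAddCommGroup H] [InnerProductSpace ℂ H]
    [FiniteDimensional ℂ H] (A B : H →ₗ[ℂ] H) : Prop :=
  A ∘ₗ B ∘ₗ A = A ∧ B ∘ₗ A ∘ₗ B = B ∧
    adjoint (A ∘ₗ B) = A ∘ₗ B ∧ adjoint (B ∘ₗ A) = B ∘ₗ A

section

variable {H : Type*} [NormedAddCommGroup H] [InnerProductSpace ℂ H] [FiniteDimensional ℂ H]

namespace IsMPInv

variable {A B : H →ₗ[ℂ] H}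

theorem apply_mem_range_adjoint (h : IsMPInv A B) (v : H) : B v ∈ range (adjoint A) := by
  refine ⟨adjoint B (B v), ?_⟩
  calc adjoint A (adjoint B (B v)) = adjoint (B ∘ₗ A) (B v) := by rw [adjoint_comp]; rfl
    _ = B v := by rw [h.2.2.2]; exact congr($(h.2.1) v)

theorem apply_apply_of_mem_range (h : IsMPInv A B) {y : H} (hy : y ∈ range A) : A (B y) = y := by
  obtain ⟨u, rfl⟩ := hy
  exact congr($(h.1) u)

theorem apply_apply_of_adjoint_apply_eq_zero (h : IsMPInv A B) {v : H} (hv : adjoint A v = 0) :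
    A (B v) = 0 := by
  calc A (B v) = adjoint (A ∘ₗ B) v := by rw [h.2.2.1]; rfl
    _ = 0 := by rw [adjoint_comp]; simp [hv]

end IsMPInv

variable {Pr Dl : H →ₗ[ℂ] H}

theorem adjoint_sub_comp_comp (hPra : adjoint Pr = Pr) (hDla : adjoint Dl = Dl) :
    adjoint (Pr - Pr ∘ₗ Dl ∘ₗ Pr) = Pr - Pr ∘ₗ Dl ∘ₗ Pr := by
  rw [map_sub, adjoint_comp, adjoint_comp, hPra, hDla, comp_assoc]

theorem adjoint_comp_self_id_sub_comp (hPr : Pr ∘ₗ Pr = Pr) (hPra : adjoint Pr = Pr)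
    (hDl : Dl ∘ₗ Dl = Dl) (hDla : adjoint Dl = Dl) :
    adjoint ((LinearMap.id - Dl) ∘ₗ Pr) ∘ₗ ((LinearMap.id - Dl) ∘ₗ Pr) = Pr - Pr ∘ₗ Dl ∘ₗ Pr := by
  have hPr' (v : H) : Pr (Pr v) = Pr v := congr($hPr v)
  have hDl' (v : H) : Dl (Dl v) = Dl v := congr($hDl v)
  rw [adjoint_comp, map_sub, adjoint_id, hPra, hDla]
  ext v
  simp only [comp_apply, LinearMap.sub_apply, LinearMap.id_apply, map_sub, hDl', hPr']
  abel

theorem range_sub_comp_comp (hPr : Pr ∘ₗ Pr = Pr) (hPra : adjoint Pr = Pr)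
    (hDl : Dl ∘ₗ Dl = Dl) (hDla : adjoint Dl = Dl) :
    range (Pr - Pr ∘ₗ Dl ∘ₗ Pr) = range (Pr ∘ₗ (LinearMap.id - Dl)) := by
  rw [← adjoint_comp_self_id_sub_comp hPr hPra hDl hDla, range_adjoint_comp_self, adjoint_comp,
    map_sub, adjoint_id, hPra, hDla]

theorem id_sub_apply_eq_starProjection_ker_inf_ker (hPr : Pr ∘ₗ Pr = Pr)
    (hPra : adjoint Pr = Pr) (hDl : Dl ∘ₗ Dl = Dl) (hDla : adjoint Dl = Dl) {ψ w : H}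
    (hψ : Pr ψ = 0) (hw : Pr (Dl (ψ + w)) = w) :
    (LinearMap.id - Dl : H →ₗ[ℂ] H) (ψ + w) = (ker Pr ⊓ ker Dl).starProjection ψ := by
  have hPrw : Pr w = w := by rw [← hw]; exact congr($hPr _)
  rw [LinearMap.sub_apply, LinearMap.id_apply]
  refine (Submodule.eq_starProjection_of_mem_orthogonal (Submodule.mem_inf.mpr ⟨?_, ?_⟩) ?_).symm
  · change Pr _ = 0
    rw [map_sub, hw, map_add, hψ, hPrw, zero_add, sub_self]
  · change Dl _ = 0
    rw [map_sub, ← comp_apply, hDl, sub_self]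
  · intro u ⟨hPru, hDlu⟩
    have hDl_inner : inner ℂ u (Dl (ψ + w)) = 0 := by
      rw [← hDla, adjoint_inner_right, hDlu, inner_zero_left]
    have hPr_inner : inner ℂ u w = 0 := by
      rw [← hPrw, ← hPra, adjoint_inner_right, hPru, inner_zero_left]
    rw [show ψ - (ψ + w - Dl (ψ + w)) = Dl (ψ + w) - w by abel, inner_sub_right, hDl_inner,
      hPr_inner, sub_self]

theorem comp_apply_add_apply_of_isMPInv (hPr : Pr ∘ₗ Pr = Pr) (hPra : adjoint Pr = Pr)
    (hDl : Dl ∘ₗ Dl = Dl) (hDla : adjoint Dl = Dl) {B : H →ₗ[ℂ] H}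
    (hB : IsMPInv (Pr - Pr ∘ₗ Dl ∘ₗ Pr) B) {ψ : H} (hψ : Pr ψ = 0) :
    Pr (Dl (ψ + B (Dl ψ))) = B (Dl ψ) := by
  set A := Pr - Pr ∘ₗ Dl ∘ₗ Pr
  set w := B (Dl ψ)
  have hPr' (v : H) : Pr (Pr v) = Pr v := congr($hPr v)
  have hAa : adjoint A = A := adjoint_sub_comp_comp hPra hDla
  have hrange : range A = range (Pr ∘ₗ (LinearMap.id - Dl)) :=
    range_sub_comp_comp hPr hPra hDl hDla
  have hPrw : Pr w = w := by
    obtain ⟨u, hu⟩ : w ∈ range (Pr ∘ₗ (LinearMap.id - Dl)) :=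
      hrange ▸ hAa ▸ hB.apply_mem_range_adjoint _
    rw [← hu, comp_apply, hPr']
  have hPrDlψ : Pr (Dl ψ) ∈ range A := hrange ▸ ⟨-ψ, by simp [hψ]⟩
  have hker : adjoint A (Dl ψ - Pr (Dl ψ)) = 0 := by
    simp [hAa, A, hPr']
  have hAw : A w = Pr (Dl ψ) := by
    calc A w = A (B (Pr (Dl ψ))) + A (B (Dl ψ - Pr (Dl ψ))) := by
          rw [← map_add, ← map_add, add_sub_cancel]
      _ = Pr (Dl ψ) := by
          rw [hB.apply_apply_of_mem_range hPrDlψ, hB.apply_apply_of_adjoint_apply_eq_zero hker,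
            add_zero]
  calc Pr (Dl (ψ + w)) = A w + Pr (Dl w) := by rw [hAw, map_add, map_add]
    _ = w := by simp [A, hPrw]

end

/-- If `ψ ∈ ker Π` and `w = (Π − ΠΔΠ)⁺ Δ ψ` then
`(I − Δ)(ψ + w) = P_{ker Π ∩ ker Δ} ψ`. -/
theorem stmt2 {H : Type*} [NormedAddCommGroup H] [InnerProductSpace ℂ H]
    [FiniteDimensional ℂ H]
    (Pr Dl : H →ₗ[ℂ] H)
    (hPr : Pr ∘ₗ Pr = Pr) (hPra : adjoint Pr = Pr)
    (hDl : Dl ∘ₗ Dl = Dl) (hDla : adjoint Dl = Dl)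
    (B : H →ₗ[ℂ] H) (hB : IsMPInv (Pr - Pr ∘ₗ Dl ∘ₗ Pr) B)
    (ψ : H) (hψ : ψ ∈ ker Pr)
    (w : H) (hw : w = B (Dl ψ)) :
    ((LinearMap.id - Dl : H →ₗ[ℂ] H)) (ψ + w) = projL (ker Pr ⊓ ker Dl) ψ := by
  subst hw
  rw [id_sub_apply_eq_starProjection_ker_inf_ker hPr hPra hDl hDla hψ
    (comp_apply_add_apply_of_isMPInv hPr hPra hDl hDla hB hψ)]
  rfl
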